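/- Let H be a Hermitian operator on a finite-dimensional complex Hilbert space with spectral decomposition H = ∑_{μ∈ι} E_μ P_μ, let S ⊆ ι, P = ∑_{μ∈S} P_μ, and suppose E_μ ≠ E_ν for all μ ∈ S, ν ∉ S. If an operator A satisfies A = P A (1−P), then for every β > 0, I_{H,β}(A) = ∑_{μ∈S} ∑_{ν∉S} ((e^{−(E_μ−E_ν)²/(4β²)} − 1)/(i(E_μ − E_ν))) P_μ A P_ν. -/

import Mathlib

open MeasureTheory Real

/-- The Heisenberg time evolution `τ^H_s(A) = e^{isH} A e^{-isH}`. -/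
noncomputable def heis {V : Type*} [NormedAddCommGroup V] [NormedSpace ℂ V]
    (H : V →L[ℂ] V) (s : ℝ) (A : V →L[ℂ] V) : V →L[ℂ] V :=
  NormedSpace.exp ((Complex.I * (s : ℂ)) • H) * A *
    NormedSpace.exp ((-(Complex.I * (s : ℂ))) • H)

/-- The Gaussian filter `φ_β(t) = (β/√π) e^{-β²t²}`. -/
noncomputable def phi (β t : ℝ) : ℝ := (β / Real.sqrt π) * Real.exp (-(β ^ 2 * t ^ 2))

/-- The almost inverse Liouvillian `I_{H,β}(A) = ∫ φ_β(t) (∫_0^t τ^H_s(A) ds) dt`. -/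
noncomputable def aiL {V : Type*} [NormedAddCommGroup V] [NormedSpace ℂ V]
    (H : V →L[ℂ] V) (β : ℝ) (A : V →L[ℂ] V) : V →L[ℂ] V :=
  ∫ t : ℝ, phi β t • (∫ s in (0:ℝ)..t, heis H s A)

/-!
Since `A = P A (1 - P)`, `A` is the sum of the blocks `P_μ A P_ν` with `μ ∈ S`, `ν ∉ S`, and the
Heisenberg evolution multiplies each block by the phase `e^{i(E_μ - E_ν)s}`. For a frequency
`ω ≠ 0` the inner integral is `(e^{iωt} - 1)/(iω)`; integrating it against `φ_β`, the Fourier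
transform of the Gaussian turns `e^{iωt}` into `e^{-ω²/(4β²)}` and `φ_β` has mass `1`.
-/

section Exponential

variable {𝔸 : Type*} [NormedRing 𝔸] [NormedAlgebra ℂ 𝔸] [CompleteSpace 𝔸]

theorem exp_smul_mul_of_mul_eq_smul {a q : 𝔸} {e : ℂ} (h : a * q = e • q) (c : ℂ) :
    NormedSpace.exp (c • a) * q = Complex.exp (c * e) • q := by
  have hpow (n : ℕ) : (c • a) ^ n * q = (c * e) ^ n • q := by
    induction n with
    | zero => simp
    | succ n ih =>
      rw [pow_succ', mul_assoc, ih, mul_smul_comm, smul_mul_assoc, h, smul_smul, smul_smul]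
      ring_nf
  rw [NormedSpace.exp_eq_tsum ℂ, ← (NormedSpace.expSeries_summable' (c • a)).tsum_mul_right,
    Complex.exp_eq_exp_ℂ, NormedSpace.exp_eq_tsum ℂ,
    ← (NormedSpace.expSeries_summable' (c * e)).tsum_smul_const]
  simp only [smul_mul_assoc, hpow, smul_smul, smul_eq_mul]

theorem mul_exp_smul_of_mul_eq_smul {a q : 𝔸} {e : ℂ} (h : q * a = e • q) (c : ℂ) :
    q * NormedSpace.exp (c • a) = Complex.exp (c * e) • q := by
  apply MulOpposite.op_injective
  rw [MulOpposite.op_mul, MulOpposite.op_smul, ← NormedSpace.exp_op, MulOpposite.op_smul]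
  exact exp_smul_mul_of_mul_eq_smul (by rw [← MulOpposite.op_mul, h, MulOpposite.op_smul]) c

end Exponential

section Heisenberg

variable {V : Type*} [NormedAddCommGroup V] [NormedSpace ℂ V]

theorem heis_finsetSum {κ : Type*} (H : V →L[ℂ] V) (s : ℝ) (T : Finset κ)
    (B : κ → V →L[ℂ] V) : heis H s (∑ k ∈ T, B k) = ∑ k ∈ T, heis H s (B k) := by
  simp only [heis, Finset.mul_sum, Finset.sum_mul]

theorem heis_mul_mul [CompleteSpace V] {H p q : V →L[ℂ] V} {e f : ℂ} (hp : H * p = e • p)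
    (hq : q * H = f • q) (s : ℝ) (B : V →L[ℂ] V) :
    heis H s (p * B * q) = Complex.exp (Complex.I * (e - f) * s) • (p * B * q) := by
  calc heis H s (p * B * q)
      = (NormedSpace.exp ((Complex.I * s) • H) * p) * B *
          (q * NormedSpace.exp ((-(Complex.I * s)) • H)) := by simp only [heis, mul_assoc]
    _ = (Complex.exp (Complex.I * s * e) * Complex.exp (-(Complex.I * s) * f)) • (p * B * q) := by
        rw [exp_smul_mul_of_mul_eq_smul hp, mul_exp_smul_of_mul_eq_smul hq, smul_mul_assoc,
          smul_mul_assoc, mul_smul_comm, smul_smul]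
    _ = Complex.exp (Complex.I * (e - f) * s) • (p * B * q) := by
        rw [← Complex.exp_add]
        ring_nf

end Heisenberg

section Projections

variable {𝕜 R ι : Type*} [Fintype ι] [Semiring 𝕜] [Semiring R] [Module 𝕜 R] {p : ι → R}

theorem sum_smul_mul_of_orthogonal [IsScalarTower 𝕜 R R] (hidem : ∀ μ, p μ * p μ = p μ)
    (horth : ∀ μ ν, μ ≠ ν → p μ * p ν = 0) (c : ι → 𝕜) (μ : ι) :
    (∑ ν, c ν • p ν) * p μ = c μ • p μ := by
  rw [Finset.sum_mul, Finset.sum_eq_single_of_mem μ (Finset.mem_univ μ)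
    fun ν _ hν => by rw [smul_mul_assoc, horth ν μ hν, smul_zero], smul_mul_assoc, hidem]

theorem mul_sum_smul_of_orthogonal [SMulCommClass 𝕜 R R] (hidem : ∀ μ, p μ * p μ = p μ)
    (horth : ∀ μ ν, μ ≠ ν → p μ * p ν = 0) (c : ι → 𝕜) (μ : ι) :
    p μ * (∑ ν, c ν • p ν) = c μ • p μ := by
  rw [Finset.mul_sum, Finset.sum_eq_single_of_mem μ (Finset.mem_univ μ)
    fun ν _ hν => by rw [mul_smul_comm, horth μ ν hν.symm, smul_zero], mul_smul_comm, hidem]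

end Projections

theorem sum_mul_mul_one_sub_sum {R ι : Type*} [Fintype ι] [DecidableEq ι] [Ring R]
    {p : ι → R} (hsum : ∑ μ, p μ = 1) (S : Finset ι) (a : R) :
    (∑ μ ∈ S, p μ) * a * (1 - ∑ μ ∈ S, p μ) = ∑ μ ∈ S, ∑ ν ∈ Sᶜ, p μ * a * p ν := by
  rw [← hsum, ← Finset.sum_add_sum_compl S p, add_sub_cancel_left, Finset.sum_mul,
    Finset.sum_mul_sum]

section GaussianFilter

open Complex

variable {β : ℝ}

theorem phi_mul_cexp_eq (β ω t : ℝ) :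
    (phi β t : ℂ) * cexp (I * ω * t) =
      ((β / √π : ℝ) : ℂ) * cexp (-(β : ℂ) ^ 2 * t ^ 2 + I * ω * t + 0) := by
  rw [phi, add_zero, Complex.exp_add, ofReal_mul, ofReal_exp, mul_assoc]
  push_cast
  ring_nf

theorem integrable_phi_mul_cexp (hβ : 0 < β) (ω : ℝ) :
    Integrable fun t : ℝ => (phi β t : ℂ) * cexp (I * ω * t) := by
  simp only [phi_mul_cexp_eq]
  exact (integrable_cexp_quadratic (by simp [← ofReal_pow]; positivity) _ _).const_mul _

theorem integral_phi_mul_cexp (hβ : 0 < β) (ω : ℝ) :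
    ∫ t : ℝ, (phi β t : ℂ) * cexp (I * ω * t) = rexp (-(ω ^ 2 / (4 * β ^ 2))) := by
  simp only [phi_mul_cexp_eq]
  rw [integral_const_mul, integral_cexp_quadratic (by simp [← ofReal_pow]; positivity)]
  have hsqrt : ((π : ℂ) / - -(β : ℂ) ^ 2) ^ (1 / 2 : ℂ) = ((√π / β : ℝ) : ℂ) := by
    rw [show √π / β = √(π / β ^ 2) by rw [Real.sqrt_div pi_nonneg, Real.sqrt_sq hβ.le],
      sqrt_eq_rpow, ofReal_cpow (by positivity), neg_neg]
    norm_num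
  have hcancel : β / √π * (√π / β) = 1 := by field_simp
  rw [hsqrt, ← mul_assoc, ← ofReal_mul, hcancel, ofReal_one, one_mul, ofReal_exp]
  congr 1
  push_cast
  ring_nf
  rw [I_sq]
  ring

theorem integrable_phi_mul_cexp_sub_one (hβ : 0 < β) (ω : ℝ) :
    Integrable fun t : ℝ => (phi β t : ℂ) * (cexp (I * ω * t) - 1) := by
  convert (integrable_phi_mul_cexp hβ ω).sub (integrable_phi_mul_cexp hβ 0) using 2 with t
  simp [mul_sub]

theorem integral_phi_mul_cexp_sub_one (hβ : 0 < β) (ω : ℝ) :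
    ∫ t : ℝ, (phi β t : ℂ) * (cexp (I * ω * t) - 1) = rexp (-(ω ^ 2 / (4 * β ^ 2))) - 1 := by
  have h0 := integral_phi_mul_cexp hβ 0
  simp only [ofReal_zero, mul_zero, zero_mul, Complex.exp_zero, mul_one] at h0
  simp only [mul_sub, mul_one]
  rw [integral_sub (integrable_phi_mul_cexp hβ ω) (by simpa using integrable_phi_mul_cexp hβ 0),
    integral_phi_mul_cexp hβ, h0]
  norm_num

end GaussianFilter

section FilteredIntegral

open Complex

variable {F : Type*} [NormedAddCommGroup F] [NormedSpace ℂ F] [CompleteSpace F] {β : ℝ}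

theorem phi_smul_intervalIntegral_cexp_smul {ω : ℝ} (hω : ω ≠ 0) (B : F) (t : ℝ) :
    phi β t • ∫ s in (0 : ℝ)..t, cexp (I * ω * s) • B =
      ((phi β t : ℂ) * (cexp (I * ω * t) - 1) / (I * ω)) • B := by
  have hIω : I * ω ≠ 0 := mul_ne_zero I_ne_zero (ofReal_ne_zero.mpr hω)
  rw [intervalIntegral.integral_smul_const, integral_exp_mul_complex hIω, ← coe_smul, smul_smul,
    ofReal_zero, mul_zero, Complex.exp_zero, mul_div_assoc]

theorem integral_phi_smul_intervalIntegral_sum_cexp_smul (hβ : 0 < β) {κ : Type*}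
    (T : Finset κ) (ω : κ → ℝ) (hω : ∀ k ∈ T, ω k ≠ 0) (B : κ → F) :
    ∫ t : ℝ, phi β t • ∫ s in (0 : ℝ)..t, ∑ k ∈ T, cexp (I * ω k * s) • B k =
      ∑ k ∈ T, (((rexp (-(ω k ^ 2 / (4 * β ^ 2))) - 1 : ℝ) : ℂ) / (I * ω k)) • B k := by
  have hcont (k : κ) : Continuous fun s : ℝ => cexp (I * ω k * s) • B k := by fun_prop
  calc ∫ t : ℝ, phi β t • ∫ s in (0 : ℝ)..t, ∑ k ∈ T, cexp (I * ω k * s) • B k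
      = ∫ t : ℝ, ∑ k ∈ T, ((phi β t : ℂ) * (cexp (I * ω k * t) - 1) / (I * ω k)) • B k := by
        congr 1 with t
        rw [intervalIntegral.integral_finsetSum fun k _ => (hcont k).intervalIntegrable _ _,
          Finset.smul_sum]
        exact Finset.sum_congr rfl fun k hk => phi_smul_intervalIntegral_cexp_smul (hω k hk) _ _
    _ = ∑ k ∈ T, (∫ t : ℝ, (phi β t : ℂ) * (cexp (I * ω k * t) - 1) / (I * ω k)) • B k := by
        rw [integral_finsetSum _ fun k _ =>
          ((integrable_phi_mul_cexp_sub_one hβ (ω k)).div_const _).smul_const _]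
        simp only [integral_smul_const]
    _ = _ := by
        simp only [integral_div, integral_phi_mul_cexp_sub_one hβ]
        push_cast
        rfl

end FilteredIntegral

theorem stmt8_general {V : Type*} [NormedAddCommGroup V] [InnerProductSpace ℂ V]
    [FiniteDimensional ℂ V]
    {ι : Type*} [Fintype ι] [DecidableEq ι] (E : ι → ℝ) (Pr : ι → (V →L[ℂ] V))
    (hPidem : ∀ μ, Pr μ * Pr μ = Pr μ)
    (hPorth : ∀ μ ν, μ ≠ ν → Pr μ * Pr ν = 0)
    (hPsum : ∑ μ, Pr μ = 1)
    (H : V →L[ℂ] V) (hH : H = ∑ μ, (E μ : ℂ) • Pr μ)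
    (S : Finset ι) (P : V →L[ℂ] V) (hP : P = ∑ μ ∈ S, Pr μ)
    (hne : ∀ μ ∈ S, ∀ ν ∉ S, E μ ≠ E ν)
    (A : V →L[ℂ] V) (hA : A = P * A * (1 - P))
    (β : ℝ) (hβ : 0 < β) :
    aiL H β A =
      ∑ μ ∈ S, ∑ ν ∈ Sᶜ,
        (((Real.exp (-((E μ - E ν) ^ 2 / (4 * β ^ 2))) - 1 : ℝ) : ℂ) /
            (Complex.I * ((E μ : ℂ) - (E ν : ℂ)))) • (Pr μ * A * Pr ν) := by
  have hHP (μ : ι) : H * Pr μ = (E μ : ℂ) • Pr μ := by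
    rw [hH, sum_smul_mul_of_orthogonal hPidem hPorth]
  have hPH (μ : ι) : Pr μ * H = (E μ : ℂ) • Pr μ := by
    rw [hH, mul_sum_smul_of_orthogonal hPidem hPorth]
  have hA_blocks : A = ∑ μ ∈ S, ∑ ν ∈ Sᶜ, Pr μ * A * Pr ν := by
    rw [← sum_mul_mul_one_sub_sum hPsum, ← hP, ← hA]
  have hheis (s : ℝ) : heis H s A = ∑ k ∈ S ×ˢ Sᶜ,
      Complex.exp (Complex.I * (E k.1 - E k.2 : ℝ) * s) • (Pr k.1 * A * Pr k.2) := by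
    rw [Finset.sum_product]
    conv_lhs => rw [hA_blocks]
    simp only [heis_finsetSum, heis_mul_mul (hHP _) (hPH _), Complex.ofReal_sub]
  have hgap : ∀ k ∈ S ×ˢ Sᶜ, E k.1 - E k.2 ≠ 0 := by
    intro k hk
    rw [Finset.mem_product, Finset.mem_compl] at hk
    exact sub_ne_zero.mpr (hne _ hk.1 _ hk.2)
  rw [aiL]
  simp only [hheis]
  rw [integral_phi_smul_intervalIntegral_sum_cexp_smul hβ _ _ hgap, Finset.sum_product]
  push_cast
  rfl

theorem stmt8 {V : Type*} [NormedAddCommGroup V] [InnerProductSpace ℂ V]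
    [FiniteDimensional ℂ V]
    {ι : Type*} [Fintype ι] [DecidableEq ι] (E : ι → ℝ) (Pr : ι → (V →L[ℂ] V))
    (hPsa : ∀ μ, IsSelfAdjoint (Pr μ))
    (hPidem : ∀ μ, Pr μ * Pr μ = Pr μ)
    (hPorth : ∀ μ ν, μ ≠ ν → Pr μ * Pr ν = 0)
    (hPsum : ∑ μ, Pr μ = 1)
    (H : V →L[ℂ] V) (hH : H = ∑ μ, (E μ : ℂ) • Pr μ)
    (S : Finset ι) (P : V →L[ℂ] V) (hP : P = ∑ μ ∈ S, Pr μ)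
    (hne : ∀ μ ∈ S, ∀ ν ∉ S, E μ ≠ E ν)
    (A : V →L[ℂ] V) (hA : A = P * A * (1 - P))
    (β : ℝ) (hβ : 0 < β) :
    aiL H β A =
      ∑ μ ∈ S, ∑ ν ∈ Sᶜ,
        (((Real.exp (-((E μ - E ν) ^ 2 / (4 * β ^ 2))) - 1 : ℝ) : ℂ) /
            (Complex.I * ((E μ : ℂ) - (E ν : ℂ)))) • (Pr μ * A * Pr ν) :=
  stmt8_general E Pr hPidem hPorth hPsum H hH S P hP hne A hA β hβ
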